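/- Let U ⊂ ℂ be an open bounded set and let h : U → ℂ̂ be continuous. Fix w₀ ∈ ℂ. Then for every δ > 0 there exists ε > 0 such that for all w with |w − w₀| < ε, every point of h⁻¹(w) lies within distance δ of the set h⁻¹(w₀) ∪ ∂U; that is, h⁻¹(w) ⊂ B(h⁻¹(w₀) ∪ ∂U; δ). -/

import Mathlib

open Complex Metric Set OnePoint Topology

/-!
Outside the `δ`-thickening of `h⁻¹(w₀) ∪ ∂U`, the closure of `U` is a compact subset of `U` on
which `h` omits `w₀`. Its image is therefore a compact set missing `w₀`, and any `w` close enough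
to `w₀` lies outside it.
-/

section

variable {X : Type*} [PseudoMetricSpace X]

lemma closure_diff_thickening_subset_of_frontier_subset {U S : Set X} (hU : IsOpen U)
    (hS : frontier U ⊆ S) {δ : ℝ} (hδ : 0 < δ) : closure U \ thickening δ S ⊆ U := by
  rintro x ⟨hx_closure, hx_far⟩
  by_contra hxU
  have hx_frontier : x ∈ frontier U := ⟨hx_closure, by rwa [hU.interior_eq]⟩
  exact hx_far (self_subset_thickening hδ S (hS hx_frontier))

theorem eventually_exists_dist_lt_fiber_union_frontier {Y : Type*} [TopologicalSpace Y]
    [T2Space Y] {U : Set X} (hU : IsOpen U) (hU_compact : IsCompact (closure U)) {f : X → Y}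
    (hf : ContinuousOn f U) (y₀ : Y) {δ : ℝ} (hδ : 0 < δ) :
    ∀ᶠ y in 𝓝 y₀, ∀ z ∈ U, f z = y →
      ∃ x ∈ {x ∈ U | f x = y₀} ∪ frontier U, dist z x < δ := by
  set S := {x ∈ U | f x = y₀} ∪ frontier U
  set K := closure U \ thickening δ S
  have hKU : K ⊆ U :=
    closure_diff_thickening_subset_of_frontier_subset hU subset_union_right hδ
  have hK_compact : IsCompact K := hU_compact.diff isOpen_thickening
  have hy₀ : y₀ ∉ f '' K := by
    rintro ⟨x, hxK, hfx⟩
    exact hxK.2 (self_subset_thickening hδ S (Or.inl ⟨hKU hxK, hfx⟩))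
  filter_upwards [((hK_compact.image_of_continuousOn (hf.mono hKU)).isClosed.isOpen_compl
    ).mem_nhds hy₀] with y hy z hzU hfz
  have hz : z ∈ thickening δ S := by
    by_contra hz_far
    exact hy ⟨z, ⟨subset_closure hzU, hz_far⟩, hfz⟩
  exact mem_thickening_iff.mp hz

end

/-- **Convergence of preimages.** Let `U ⊆ ℂ` be open and bounded and `h : U → ℂ̂` continuous.
For every `w₀ ∈ ℂ` and `δ > 0` there is `ε > 0` such that whenever `|w - w₀| < ε`, every
preimage of `w` under `h` in `U` lies within distance `δ` of `h⁻¹(w₀) ∪ ∂U`. -/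
theorem preimages_near_preimages_or_boundary
    (U : Set ℂ) (hUopen : IsOpen U) (hUbdd : Bornology.IsBounded U)
    (h : ℂ → OnePoint ℂ) (hc : ContinuousOn h U) (w₀ : ℂ) :
    ∀ δ > (0:ℝ), ∃ ε > (0:ℝ), ∀ w : ℂ, ‖w - w₀‖ < ε →
      ∀ z ∈ U, h z = ↑w →
        ∃ y ∈ {x ∈ U | h x = ↑w₀} ∪ frontier U, ‖z - y‖ < δ := by
  intro δ hδ
  have hnear := eventually_exists_dist_lt_fiber_union_frontier hUopen hUbdd.isCompact_closure
    hc (w₀ : OnePoint ℂ) hδ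
  obtain ⟨ε, hε, hball⟩ := Metric.eventually_nhds_iff.mp
    (continuous_coe.continuousAt.eventually hnear)
  refine ⟨ε, hε, fun w hw z hzU hz => ?_⟩
  simpa only [dist_eq_norm] using hball (by rwa [dist_eq_norm]) z hzU hz
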